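/- arXiv:2012.09925 — 3 statements merged into one kernel-verified Lean document; each statement's English description precedes it below -/
import Mathlib

section
/- Carl's inequality: for every r > 0 there is a constant C(r) > 0 such that for any compact subset F of a Banach space X and any n ∈ ℕ, max_{1 ≤ k ≤ n} k^r ε_k(F, X) ≤ C(r) · max_{1 ≤ m ≤ n} m^r d_{m−1}(F, X), where ε_k is the k-th entropy number and d_m the Kolmogorov width. -/
open scoped BigOperators

/-- The Kolmogorov width `d_m(A, X)`. For `m = 0` this is `sup_{f ∈ A} ‖f‖`. -/
noncomputable def kolWidth {X : Type*} [NormedAddCommGroup X] [NormedSpace ℝ X]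
    (m : ℕ) (A : Set X) : ℝ :=
  ⨅ u : Fin m → X, ⨆ f ∈ A, ⨅ c : Fin m → ℝ, ‖f - ∑ i, c i • u i‖

/-- The entropy number `ε_k(F, X)`: the infimum of `ε > 0` such that `F` can be
covered by `2^k` balls of radius `ε` in `X`. -/
noncomputable def entropyNum {X : Type*} [NormedAddCommGroup X] (k : ℕ) (F : Set X) : ℝ :=
  sInf {ε : ℝ | 0 < ε ∧ ∃ y : Fin (2 ^ k) → X, F ⊆ ⋃ j, Metric.closedBall (y j) ε}


open Metric Set Module in
lemma exists_half_net (E : Type*) [NormedAddCommGroup E] [NormedSpace ℝ E]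
    [FiniteDimensional ℝ E] (x : E) (R : ℝ) (hR : 0 ≤ R) :
    ∃ s : Finset E, s.card ≤ 5 ^ (finrank ℝ E) ∧
      closedBall x R ⊆ ⋃ c ∈ s, closedBall c (R / 2) := by
  classical
  rcases eq_or_lt_of_le hR with h0 | hRpos
  · refine ⟨{x}, by simpa using Nat.one_le_two_pow.trans (Nat.pow_le_pow_left (by norm_num) _), ?_⟩
    · intro z hz
      simp only [Finset.mem_singleton, mem_iUnion]
      exact ⟨x, by simp, by simpa [← h0] using hz⟩
  · -- maximal (R/2)-separated set
    set P : Finset E → Prop := fun s =>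
      (↑s ⊆ closedBall x R) ∧ ∀ c ∈ s, ∀ d ∈ s, c ≠ d → R / 2 ≤ dist c d with hP
    set T : Set ℕ := {n | ∃ s : Finset E, P s ∧ s.card = n} with hT
    have hbdd : ∀ n ∈ T, n ≤ 5 ^ finrank ℝ E := by
      rintro n ⟨s, ⟨hsub, hsep⟩, rfl⟩
      set φ : E → E := fun c => (2 / R) • (c - x) with hφ
      have hφinj : Function.Injective φ := by
        intro a b hab
        have h2R : (2 / R) ≠ 0 := by positivity
        simpa [hφ, sub_left_inj] using smul_right_injective E h2R hab
      rw [← Finset.card_image_of_injective s hφinj]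
      apply Besicovitch.card_le_of_separated
      · intro c hc
        simp only [Finset.mem_image] at hc
        obtain ⟨c', hc', rfl⟩ := hc
        have : ‖c' - x‖ ≤ R := by
          have := hsub hc'; rwa [mem_closedBall, dist_eq_norm] at this
        calc ‖φ c'‖ = (2 / R) * ‖c' - x‖ := by
              rw [hφ]
              simp only [norm_smul, Real.norm_eq_abs]
              rw [abs_of_pos (by positivity : (0:ℝ) < 2 / R)]
          _ ≤ (2 / R) * R := by
              exact mul_le_mul_of_nonneg_left this (by positivity)
          _ = 2 := by field_simp
      · intro c hc d hd hcd
        simp only [Finset.mem_image] at hc hd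
        obtain ⟨c', hc', rfl⟩ := hc
        obtain ⟨d', hd', rfl⟩ := hd
        have hne : c' ≠ d' := fun h => hcd (by rw [h])
        have hsep' := hsep c' hc' d' hd' hne
        rw [dist_eq_norm] at hsep'
        have heq : φ c' - φ d' = (2 / R) • (c' - d') := by
          rw [hφ]; simp only [← smul_sub]; congr 1; abel
        rw [heq, norm_smul, Real.norm_eq_abs, abs_of_pos (by positivity : (0:ℝ) < 2 / R)]
        calc (1:ℝ) = (2 / R) * (R / 2) := by field_simp
          _ ≤ (2 / R) * ‖c' - d'‖ := mul_le_mul_of_nonneg_left hsep' (by positivity)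
    have hTne : T.Nonempty := ⟨0, ∅, ⟨by simp, by simp⟩, rfl⟩
    have hTbdd : BddAbove T := ⟨5 ^ finrank ℝ E, hbdd⟩
    obtain ⟨s, hPs, hcard⟩ := Nat.sSup_mem hTne hTbdd
    refine ⟨s, ?_, ?_⟩
    · rw [hcard]; exact hbdd _ ⟨s, hPs, hcard⟩
    · intro z hz
      by_contra hzout
      simp only [mem_iUnion, mem_closedBall, not_exists, exists_prop] at hzout
      have hzsep : ∀ c ∈ s, R / 2 < dist z c := fun c hc =>
        lt_of_not_ge fun h => hzout c ⟨hc, h⟩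
      have hzns : z ∉ s := fun hzs => by
        have := hzsep z hzs
        rw [dist_self] at this
        linarith
      have : s.card + 1 ∈ T := by
        refine ⟨insert z s, ⟨?_, ?_⟩, by rw [Finset.card_insert_of_notMem hzns]⟩
        · intro c hc
          simp only [Finset.coe_insert, Set.mem_insert_iff] at hc
          rcases hc with rfl | hc
          · exact hz
          · exact hPs.1 hc
        · intro c hc d hd hcd
          simp only [Finset.mem_insert] at hc hd
          rcases hc with rfl | hc <;> rcases hd with rfl | hd
          · exact absurd rfl hcd
          · exact (hzsep d hd).le
          · rw [dist_comm]; exact (hzsep c hc).le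
          · exact hPs.2 c hc d hd hcd
      have hle := le_csSup hTbdd this
      omega


open Metric Set Module in
lemma exists_iter_net (E : Type*) [NormedAddCommGroup E] [NormedSpace ℝ E]
    [FiniteDimensional ℝ E] (t : ℕ) (x : E) (R : ℝ) (hR : 0 ≤ R) :
    ∃ s : Finset E, s.card ≤ 5 ^ (finrank ℝ E * t) ∧
      closedBall x R ⊆ ⋃ c ∈ s, closedBall c (R / 2 ^ t) := by
  classical
  induction t generalizing x R with
  | zero =>
    refine ⟨{x}, by simp, ?_⟩
    intro z hz
    simp only [mem_iUnion, Finset.mem_singleton, exists_prop]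
    exact ⟨x, rfl, by simpa using hz⟩
  | succ t ih =>
    obtain ⟨s₁, hs₁card, hs₁cov⟩ := exists_half_net E x R hR
    have hR2 : (0:ℝ) ≤ R / 2 := by linarith
    set f : E → Finset E := fun c => (ih c (R / 2) hR2).choose with hf
    have hfspec : ∀ c : E, (f c).card ≤ 5 ^ (finrank ℝ E * t) ∧
        closedBall c (R / 2) ⊆ ⋃ w ∈ f c, closedBall w (R / 2 / 2 ^ t) :=
      fun c => (ih c (R / 2) hR2).choose_spec
    refine ⟨s₁.biUnion f, ?_, ?_⟩
    · calc (s₁.biUnion f).card ≤ ∑ c ∈ s₁, (f c).card := Finset.card_biUnion_le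
        _ ≤ ∑ _c ∈ s₁, 5 ^ (finrank ℝ E * t) :=
            Finset.sum_le_sum fun c _ => (hfspec c).1
        _ = s₁.card * 5 ^ (finrank ℝ E * t) := by rw [Finset.sum_const, smul_eq_mul]
        _ ≤ 5 ^ finrank ℝ E * 5 ^ (finrank ℝ E * t) :=
            Nat.mul_le_mul_right _ hs₁card
        _ = 5 ^ (finrank ℝ E * (t + 1)) := by rw [← pow_add]; ring_nf
    · intro z hz
      obtain ⟨c, hc, hzc⟩ := mem_iUnion₂.1 (hs₁cov hz)
      obtain ⟨w, hw, hzw⟩ := mem_iUnion₂.1 ((hfspec c).2 hzc)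
      refine mem_iUnion₂.2 ⟨w, Finset.mem_biUnion.2 ⟨c, hc, hw⟩, ?_⟩
      have : R / 2 / 2 ^ t = R / 2 ^ (t + 1) := by ring
      rwa [this] at hzw


open Metric Set Module in
lemma cover_step {X : Type*} [NormedAddCommGroup X] [NormedSpace ℝ X]
    {F : Set X} {s : Finset X} {ρ d : ℝ} (hρ : 0 ≤ ρ) (hd : 0 ≤ d)
    {m : ℕ} (u : Fin m → X)
    (happrox : ∀ f ∈ F, ∃ c : Fin m → ℝ, ‖f - ∑ i, c i • u i‖ ≤ d)
    (hcov : F ⊆ ⋃ c ∈ s, closedBall c ρ) (t : ℕ) :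
    ∃ s' : Finset X, s'.card ≤ s.card * 5 ^ (m * t) ∧
      F ⊆ ⋃ c ∈ s', closedBall c (d + (2 * ρ + 2 * d) / 2 ^ t) := by
  classical
  set V : Submodule ℝ X := Submodule.span ℝ (Set.range u) with hV
  haveI : FiniteDimensional ℝ V := FiniteDimensional.span_of_finite ℝ (Set.finite_range u)
  have hrank : finrank ℝ V ≤ m := by
    have h1 : finrank ℝ V ≤ (Set.range u).toFinset.card := finrank_span_le_card (Set.range u)
    refine h1.trans ?_
    rw [Set.toFinset_range]
    exact (Finset.card_image_le).trans (by simp)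
  -- the element of V given by coefficients
  have hmemV : ∀ c : Fin m → ℝ, (∑ i, c i • u i) ∈ V := by
    intro c
    exact Submodule.sum_mem _ fun i _ =>
      Submodule.smul_mem _ _ (Submodule.subset_span (Set.mem_range_self i))
  have hRad : (0:ℝ) ≤ 2 * ρ + 2 * d := by linarith
  -- for each center c with F ∩ ball nonempty, a net in V
  have hnet : ∀ c : X, (F ∩ closedBall c ρ).Nonempty →
      ∃ s' : Finset X, s'.card ≤ 5 ^ (m * t) ∧
        ∀ f ∈ F ∩ closedBall c ρ, ∃ w ∈ s', dist f w ≤ d + (2 * ρ + 2 * d) / 2 ^ t := by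
    intro c hne
    obtain ⟨f₀, hf₀F, hf₀c⟩ := hne
    obtain ⟨c₀, hc₀⟩ := happrox f₀ hf₀F
    set v₀ : V := ⟨∑ i, c₀ i • u i, hmemV c₀⟩ with hv₀
    obtain ⟨sV, hsVcard, hsVcov⟩ := exists_iter_net V t v₀ (2 * ρ + 2 * d) hRad
    refine ⟨sV.image (Subtype.val), ?_, ?_⟩
    · refine Finset.card_image_le.trans (hsVcard.trans ?_)
      exact Nat.pow_le_pow_right (by norm_num) (Nat.mul_le_mul_right _ hrank)
    · rintro f ⟨hfF, hfc⟩
      obtain ⟨cf, hcf⟩ := happrox f hfF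
      set vf : V := ⟨∑ i, cf i • u i, hmemV cf⟩ with hvf
      have hdist : dist vf v₀ ≤ 2 * ρ + 2 * d := by
        rw [Subtype.dist_eq, dist_eq_norm]
        have h1 : (vf : X) - (v₀ : X) =
            ((∑ i, cf i • u i) - f) + (f - f₀) + (f₀ - ∑ i, c₀ i • u i) := by
          simp only [hvf, hv₀]; abel
        rw [h1]
        have hffd : ‖f - f₀‖ ≤ 2 * ρ := by
          have := dist_triangle_right f f₀ c
          rw [mem_closedBall] at hfc hf₀c
          rw [← dist_eq_norm]
          linarith
        calc ‖_ + (f₀ - ∑ i, c₀ i • u i)‖ ≤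
            ‖(∑ i, cf i • u i) - f + (f - f₀)‖ + ‖f₀ - ∑ i, c₀ i • u i‖ := norm_add_le _ _
          _ ≤ ‖(∑ i, cf i • u i) - f‖ + ‖f - f₀‖ + ‖f₀ - ∑ i, c₀ i • u i‖ := by
              have := norm_add_le ((∑ i, cf i • u i) - f) (f - f₀)
              linarith
          _ ≤ d + 2 * ρ + d := by
              rw [norm_sub_rev] at hcf
              gcongr
          _ = 2 * ρ + 2 * d := by ring
      have hvfmem : vf ∈ closedBall v₀ (2 * ρ + 2 * d) := by rwa [mem_closedBall]
      obtain ⟨w, hw, hvw⟩ := mem_iUnion₂.1 (hsVcov hvfmem)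
      refine ⟨(w : X), Finset.mem_image_of_mem _ hw, ?_⟩
      calc dist f (w : X) ≤ dist f (vf : X) + dist (vf : X) (w : X) := dist_triangle _ _ _
        _ ≤ d + (2 * ρ + 2 * d) / 2 ^ t := by
            rw [mem_closedBall, Subtype.dist_eq] at hvw
            have : dist f (vf : X) ≤ d := by rw [dist_eq_norm]; exact hcf
            linarith
  -- assemble
  set g : X → Finset X := fun c =>
    if h : (F ∩ closedBall c ρ).Nonempty then (hnet c h).choose else ∅ with hg
  refine ⟨s.biUnion g, ?_, ?_⟩
  · calc (s.biUnion g).card ≤ ∑ c ∈ s, (g c).card := Finset.card_biUnion_le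
      _ ≤ ∑ _c ∈ s, 5 ^ (m * t) := by
          refine Finset.sum_le_sum fun c _ => ?_
          rw [hg]
          beta_reduce
          by_cases h : (F ∩ closedBall c ρ).Nonempty
          · rw [dif_pos h]; exact (hnet c h).choose_spec.1
          · rw [dif_neg h]; simp
      _ = s.card * 5 ^ (m * t) := by rw [Finset.sum_const, smul_eq_mul]
  · intro f hf
    obtain ⟨c, hc, hfc⟩ := mem_iUnion₂.1 (hcov hf)
    have hne : (F ∩ closedBall c ρ).Nonempty := ⟨f, hf, hfc⟩
    obtain ⟨w, hw, hdw⟩ := (hnet c hne).choose_spec.2 f ⟨hf, hfc⟩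
    refine mem_iUnion₂.2 ⟨w, Finset.mem_biUnion.2 ⟨c, hc, ?_⟩, by rwa [mem_closedBall]⟩
    rw [hg]
    beta_reduce
    rw [dif_pos hne]
    exact hw


section kw
open Metric Set Module
set_option linter.unusedSectionVars false
set_option linter.unusedVariables false
variable {X : Type*} [NormedAddCommGroup X] [NormedSpace ℝ X] {F : Set X}

lemma bound_of_compact (hF : IsCompact F) : ∃ Rb : ℝ, 0 ≤ Rb ∧ ∀ f ∈ F, ‖f‖ ≤ Rb := by
  obtain ⟨r, hr⟩ := hF.isBounded.subset_closedBall 0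
  exact ⟨max r 0, le_max_right _ _, fun f hf => by
    have := hr hf
    rw [mem_closedBall, dist_zero_right] at this
    exact this.trans (le_max_left _ _)⟩

lemma ginf_nonneg {m : ℕ} (u : Fin m → X) (f : X) :
    0 ≤ ⨅ c : Fin m → ℝ, ‖f - ∑ i, c i • u i‖ :=
  Real.iInf_nonneg fun _ => norm_nonneg _

lemma ginf_le_norm {m : ℕ} (u : Fin m → X) (f : X) :
    (⨅ c : Fin m → ℝ, ‖f - ∑ i, c i • u i‖) ≤ ‖f‖ := by
  have := ciInf_le (f := fun c : Fin m → ℝ => ‖f - ∑ i, c i • u i‖)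
    ⟨0, by rintro y ⟨c, rfl⟩; exact norm_nonneg _⟩ (fun _ => (0:ℝ))
  simpa using this

lemma bddAbove_inner {m : ℕ} (u : Fin m → X) {Rb : ℝ} (hRb : 0 ≤ Rb)
    (hb : ∀ f ∈ F, ‖f‖ ≤ Rb) :
    BddAbove (Set.range fun f : X =>
      ⨆ _ : f ∈ F, ⨅ c : Fin m → ℝ, ‖f - ∑ i, c i • u i‖) := by
  refine ⟨Rb, ?_⟩
  rintro y ⟨f, rfl⟩
  exact Real.iSup_le (fun hf => (ginf_le_norm u f).trans (hb f hf)) hRb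

lemma ginf_le_biSup {m : ℕ} (u : Fin m → X) {Rb : ℝ} (hRb : 0 ≤ Rb)
    (hb : ∀ f ∈ F, ‖f‖ ≤ Rb) {f : X} (hf : f ∈ F) :
    (⨅ c : Fin m → ℝ, ‖f - ∑ i, c i • u i‖) ≤
      ⨆ g ∈ F, ⨅ c : Fin m → ℝ, ‖g - ∑ i, c i • u i‖ := by
  refine le_ciSup_of_le (bddAbove_inner u hRb hb) f ?_
  rw [ciSup_pos hf]

lemma biSup_le {m : ℕ} (u : Fin m → X) {Rb : ℝ} (hRb : 0 ≤ Rb)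
    (hb : ∀ f ∈ F, ‖f‖ ≤ Rb) :
    (⨆ g ∈ F, ⨅ c : Fin m → ℝ, ‖g - ∑ i, c i • u i‖) ≤ Rb :=
  Real.iSup_le (fun f => Real.iSup_le
    (fun hf => (ginf_le_norm u f).trans (hb f hf)) hRb) hRb

lemma kolWidth_nonneg (hF : IsCompact F) (m : ℕ) : 0 ≤ kolWidth m F := by
  refine Real.iInf_nonneg fun u => Real.iSup_nonneg fun f => Real.iSup_nonneg fun hf =>
    ginf_nonneg u f

lemma norm_le_kolWidth_zero (hF : IsCompact F) {f : X} (hf : f ∈ F) :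
    ‖f‖ ≤ kolWidth 0 F := by
  obtain ⟨Rb, hRb, hb⟩ := bound_of_compact hF
  have key : ∀ u : Fin 0 → X,
      (⨆ g ∈ F, ⨅ c : Fin 0 → ℝ, ‖g - ∑ i, c i • u i‖) =
      ⨆ g ∈ F, ⨅ _c : Fin 0 → ℝ, ‖g‖ := by
    intro u; congr 1; funext g; congr 1; funext hg; congr 1; funext c; simp
  have h1 : kolWidth 0 F = ⨆ g ∈ F, ⨅ _c : Fin 0 → ℝ, ‖g‖ := by
    rw [kolWidth]
    rw [show (fun u : Fin 0 → X => ⨆ g ∈ F, ⨅ c : Fin 0 → ℝ, ‖g - ∑ i, c i • u i‖)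
      = fun _ => ⨆ g ∈ F, ⨅ _c : Fin 0 → ℝ, ‖g‖ from funext key]
    exact ciInf_const
  rw [h1]
  have h2 : ∀ g : X, (⨅ _c : Fin 0 → ℝ, ‖g‖) = ‖g‖ := fun g => ciInf_const
  have h3 : ‖f‖ ≤ ⨆ g ∈ F, ⨅ _c : Fin 0 → ℝ, ‖g‖ := by
    refine le_ciSup_of_le ⟨Rb, ?_⟩ f ?_
    · rintro y ⟨g, rfl⟩
      exact Real.iSup_le (fun hg => (h2 g).le.trans (hb g hg)) hRb
    · rw [ciSup_pos hf, h2]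
  exact h3

lemma kolWidth_approx (hF : IsCompact F) {m : ℕ} {b : ℝ} (hb : kolWidth m F < b) :
    ∃ u : Fin m → X, ∀ f ∈ F, ∃ c : Fin m → ℝ, ‖f - ∑ i, c i • u i‖ ≤ b := by
  obtain ⟨Rb, hRb, hbd⟩ := bound_of_compact hF
  obtain ⟨u, hu⟩ := exists_lt_of_ciInf_lt hb
  refine ⟨u, fun f hf => ?_⟩
  have h1 : (⨅ c : Fin m → ℝ, ‖f - ∑ i, c i • u i‖) < b :=
    lt_of_le_of_lt (ginf_le_biSup u hRb hbd hf) hu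
  obtain ⟨c, hc⟩ := exists_lt_of_ciInf_lt h1
  exact ⟨c, hc.le⟩

lemma subset_closedBall_kolWidth_zero (hF : IsCompact F) :
    F ⊆ closedBall (0 : X) (kolWidth 0 F) := fun f hf => by
  rw [mem_closedBall, dist_zero_right]; exact norm_le_kolWidth_zero hF hf

lemma entropyNum_le_of_cover {k : ℕ} {s : Finset X} {ρ ρ' : ℝ}
    (hcard : s.card ≤ 2 ^ k) (hρ : ρ ≤ ρ') (hρ' : 0 < ρ')
    (hcov : F ⊆ ⋃ c ∈ s, closedBall c ρ) : entropyNum k F ≤ ρ' := by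
  classical
  set l := s.toList with hl
  set y : Fin (2 ^ k) → X := fun j =>
    if h : (j : ℕ) < l.length then l.get ⟨j, h⟩ else 0 with hy
  have hmem : ∀ c ∈ s, ∃ j : Fin (2 ^ k), y j = c := by
    intro c hc
    have hcl : c ∈ l := by rw [hl]; exact Finset.mem_toList.2 hc
    obtain ⟨i, hi⟩ := List.get_of_mem hcl
    have hlen : l.length ≤ 2 ^ k := by
      rw [hl, Finset.length_toList]; exact hcard
    refine ⟨⟨i, lt_of_lt_of_le i.2 hlen⟩, ?_⟩
    rw [hy]
    simp only
    rw [dif_pos (show ((⟨i, lt_of_lt_of_le i.2 hlen⟩ : Fin (2^k)) : ℕ) < l.length from i.2)]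
    exact hi ▸ rfl
  refine csInf_le ⟨0, fun ε hε => hε.1.le⟩ ⟨hρ', y, ?_⟩
  intro f hf
  obtain ⟨c, hc, hfc⟩ := mem_iUnion₂.1 (hcov hf)
  obtain ⟨j, hj⟩ := hmem c hc
  refine mem_iUnion.2 ⟨j, ?_⟩
  rw [mem_closedBall, hj]
  exact le_trans (by rwa [mem_closedBall] at hfc) hρ

end kw

lemma step_num {σ δ ρ d B p q : ℝ} (hσ : 0 ≤ σ) (hδ : 0 < δ)
    (hρ : ρ ≤ 2 * σ * (q * B) + 2 * δ) (hd : d ≤ σ * B + δ) (hB : 0 ≤ B)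
    (hq : 1 ≤ q) (hp : 8 * q ≤ p) :
    d + (2 * ρ + 2 * d) / p ≤ 2 * (σ * B) + 2 * δ := by
  have hp0 : 0 < p := lt_of_lt_of_le (by nlinarith) hp
  have h1 : 2 * ρ + 2 * d ≤ p * (σ * B + δ) := by
    have hkey := mul_le_mul_of_nonneg_right (show 4 * q + 2 ≤ p by linarith)
      (mul_nonneg hσ hB)
    nlinarith
  have h2 : (2 * ρ + 2 * d) / p ≤ σ * B + δ := by
    rw [div_le_iff₀ hp0]; nlinarith
  linarith

-- the sum bound
lemma S_bound : ∀ N : ℕ, (∑ j ∈ Finset.range N, (N - j + 1) * 2 ^ j) + N + 3 ≤ 3 * 2 ^ N := by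
  intro N
  induction N with
  | zero => simp
  | succ N ih =>
    have hid : (∑ j ∈ Finset.range (N + 1), (N + 1 - j + 1) * 2 ^ j)
        = 2 * (∑ j ∈ Finset.range N, (N - j + 1) * 2 ^ j) + (N + 2) := by
      rw [Finset.sum_range_succ' (fun j => (N + 1 - j + 1) * 2 ^ j) N]
      simp only [Nat.succ_sub_succ, pow_succ, Nat.sub_zero, pow_zero, mul_one]
      rw [Finset.mul_sum]
      congr 1
      · apply Finset.sum_congr rfl
        intro j hj
        ring
    rw [hid]
    have : 3 * 2 ^ (N + 1) = 2 * (3 * 2 ^ N) := by ring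
    omega


open Metric Set Module in
/-- Carl's inequality: for every `r > 0` there is `C(r) > 0` such that for every
Banach space `X`, every compact `F ⊆ X` and every `n`,
`max_{1 ≤ k ≤ n} k^r ε_k(F, X) ≤ C(r) max_{1 ≤ m ≤ n} m^r d_{m-1}(F, X)`. -/
theorem carl_inequality (r : ℝ) (hr : 0 < r) :
    ∃ C : ℝ, 0 < C ∧
      ∀ (X : Type) [NormedAddCommGroup X] [NormedSpace ℝ X] [CompleteSpace X]
        (F : Set X), IsCompact F → ∀ n k : ℕ, 1 ≤ k → k ≤ n →
        ∃ m : ℕ, 1 ≤ m ∧ m ≤ n ∧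
          (k : ℝ) ^ r * entropyNum k F ≤ C * ((m : ℝ) ^ r * kolWidth (m - 1) F) := by
  classical
  set a : ℕ := ⌈r⌉₊ + 1 with ha
  set K : ℕ := 9 * a with hK
  have haR : (r + 1) ≤ (a : ℝ) := by
    have := Nat.le_ceil r
    push_cast [ha]
    linarith
  have ha1 : 1 ≤ a := by omega
  have hK1 : 1 ≤ K := by omega
  have hq1 : (1 : ℝ) ≤ (2 : ℝ) ^ r := Real.one_le_rpow one_le_two hr.le
  refine ⟨2 * (2 : ℝ) ^ r * (2 * (K : ℝ)) ^ r, by positivity, ?_⟩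
  intro X _ _ _ F hF n k hk1 hkn
  -- the maximizer
  set g : ℕ → ℝ := fun m => (m : ℝ) ^ r * kolWidth (m - 1) F with hg
  have hIcc : (Finset.Icc 1 k).Nonempty := ⟨1, Finset.mem_Icc.2 ⟨le_refl 1, hk1⟩⟩
  obtain ⟨m₀, hm₀mem, hm₀max⟩ := Finset.exists_max_image (Finset.Icc 1 k) g hIcc
  set σ : ℝ := g m₀ with hσdef
  obtain ⟨hm₀1, hm₀k⟩ := Finset.mem_Icc.1 hm₀mem
  have hw0 : kolWidth 0 F ≤ σ := by
    have h1 := hm₀max 1 (Finset.mem_Icc.2 ⟨le_refl 1, hk1⟩)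
    rw [hg] at h1
    simpa [Real.one_rpow] using h1
  have hσ0 : 0 ≤ σ := (kolWidth_nonneg hF 0).trans hw0
  refine ⟨m₀, hm₀1, hm₀k.trans hkn, ?_⟩
  -- width bounds at dyadic dimensions
  have hW : ∀ j : ℕ, 2 ^ j + 1 ≤ k →
      kolWidth (2 ^ j) F ≤ σ * ((2 : ℝ) ^ ((j : ℝ) * r))⁻¹ := by
    intro j hj
    have hmem : (2 ^ j + 1) ∈ Finset.Icc 1 k := Finset.mem_Icc.2 ⟨Nat.le_add_left 1 (2 ^ j), hj⟩
    have h1 := hm₀max (2 ^ j + 1) hmem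
    rw [hg] at h1
    simp only [Nat.add_sub_cancel] at h1
    have hwnn : 0 ≤ kolWidth (2 ^ j) F := kolWidth_nonneg hF _
    have hple : (2 : ℝ) ^ ((j : ℝ) * r) ≤ ((2 ^ j + 1 : ℕ) : ℝ) ^ r := by
      have e1 : (2 : ℝ) ^ ((j : ℝ) * r) = (((2 : ℕ) ^ j : ℕ) : ℝ) ^ r := by
        rw [Real.rpow_mul (by norm_num), Real.rpow_natCast]
        push_cast
        ring_nf
      rw [e1]
      apply Real.rpow_le_rpow (by positivity) (by push_cast; linarith) hr.le
    have hq0 : (0 : ℝ) < (2 : ℝ) ^ ((j : ℝ) * r) := Real.rpow_pos_of_pos (by norm_num) _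
    rw [mul_comm σ, ← div_eq_inv_mul]
    rw [le_div_iff₀ hq0]
    calc kolWidth (2 ^ j) F * (2 : ℝ) ^ ((j : ℝ) * r)
        ≤ kolWidth (2 ^ j) F * ((2 ^ j + 1 : ℕ) : ℝ) ^ r :=
          mul_le_mul_of_nonneg_left hple hwnn
      _ = ((2 ^ j + 1 : ℕ) : ℝ) ^ r * kolWidth (2 ^ j) F := by ring
      _ ≤ σ := by exact_mod_cast h1
  -- choice of N
  set N : ℕ := Nat.log 2 (k / K) with hN
  have hbits : N = 0 ∨ K * 2 ^ N ≤ k := by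
    rcases Nat.eq_zero_or_pos (k / K) with h0 | hpos
    · left; rw [hN, h0]; simp
    · right
      have h2 : 2 ^ N ≤ k / K := by
        rw [hN]; exact Nat.pow_log_le_self 2 (by omega)
      calc K * 2 ^ N ≤ K * (k / K) := Nat.mul_le_mul_left _ h2
        _ ≤ k := Nat.mul_div_le k K
  have hk2K : k < 2 * K * 2 ^ N := by
    rcases Nat.lt_or_ge k K with hlt | hge
    · have : (1:ℕ) ≤ 2 ^ N := Nat.one_le_two_pow
      calc k < K := hlt
        _ ≤ 2 * K * 2 ^ N := by nlinarith
    · have hq : 1 ≤ k / K := Nat.one_le_div_iff (by omega) |>.2 hge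
      have hlog : k / K < 2 ^ (N + 1) := by
        rw [hN]; exact Nat.lt_pow_succ_log_self (by norm_num) _
      have hkK : k < K * (k / K + 1) := by
        calc k = K * (k / K) + k % K := (Nat.div_add_mod k K).symm
          _ < K * (k / K) + K := Nat.add_lt_add_left (Nat.mod_lt k (by omega)) _
          _ = K * (k / K + 1) := by rw [Nat.mul_succ]
      calc k < K * (k / K + 1) := hkK
        _ ≤ K * 2 ^ (N + 1) := Nat.mul_le_mul_left _ (by omega)
        _ = 2 * K * 2 ^ N := by ring
  have hwidthable : ∀ i, i < N → 2 ^ i + 1 ≤ k := by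
    intro i hi
    have hN1 : K * 2 ^ N ≤ k := by
      rcases hbits with h0 | h; · omega
      · exact h
    have h1 : 2 ^ i + 1 ≤ 2 ^ N := by
      have : 2 ^ (i + 1) ≤ 2 ^ N := Nat.pow_le_pow_right (by norm_num) hi
      have h2 : 2 ^ i + 1 ≤ 2 ^ (i + 1) := by
        rw [pow_succ]
        have : (1:ℕ) ≤ 2 ^ i := Nat.one_le_two_pow
        omega
      omega
    calc 2 ^ i + 1 ≤ 2 ^ N := h1
      _ ≤ K * 2 ^ N := Nat.le_mul_of_pos_left _ (by omega)
      _ ≤ k := hN1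
  -- the key entropy estimate
  have key : ∀ δ : ℝ, 0 < δ → entropyNum k F ≤
      2 * σ * ((2 : ℝ) ^ r * ((2 : ℝ) ^ ((N : ℝ) * r))⁻¹) + 3 * δ := by
    intro δ hδ
    -- extract approximating subspaces
    have hus : ∀ i, i < N → ∃ u : Fin (2 ^ i) → X, ∀ f ∈ F, ∃ c : Fin (2 ^ i) → ℝ,
        ‖f - ∑ l, c l • u l‖ ≤ σ * ((2 : ℝ) ^ ((i : ℝ) * r))⁻¹ + δ := by
      intro i hi
      apply kolWidth_approx hF
      calc kolWidth (2 ^ i) F ≤ σ * ((2 : ℝ) ^ ((i : ℝ) * r))⁻¹ := hW i (hwidthable i hi)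
        _ < _ := by linarith
    choose u hu using hus
    -- the chain
    set S : ℕ → ℕ := fun i => ∑ j ∈ Finset.range i, (N - j + 1) * 2 ^ j with hS
    have chain : ∀ i, i ≤ N → ∃ (s : Finset X) (ρ : ℝ), s.card ≤ 5 ^ (a * S i) ∧ 0 ≤ ρ ∧
        ρ ≤ 2 * σ * ((2 : ℝ) ^ (((i : ℝ) - 1) * r))⁻¹ + 2 * δ ∧
        F ⊆ ⋃ c ∈ s, closedBall c ρ := by
      intro i
      induction i with
      | zero =>
        intro _
        refine ⟨{0}, kolWidth 0 F, by simp [hS], kolWidth_nonneg hF 0, ?_, ?_⟩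
        · have hpos : (0:ℝ) < (2 : ℝ) ^ (((0 : ℝ) - 1) * r) := Real.rpow_pos_of_pos (by norm_num) _
          have hle1 : (2 : ℝ) ^ (((0 : ℝ) - 1) * r) ≤ 1 := by
            apply Real.rpow_le_one_of_one_le_of_nonpos one_le_two
            nlinarith
          have : σ ≤ 2 * σ * ((2 : ℝ) ^ (((0 : ℝ) - 1) * r))⁻¹ := by
            rw [mul_comm (2 * σ), ← div_eq_inv_mul, le_div_iff₀ hpos]
            nlinarith
          push_cast
          linarith
        · intro f hf
          refine mem_iUnion₂.2 ⟨0, by simp, ?_⟩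
          exact subset_closedBall_kolWidth_zero hF hf
      | succ i ih =>
        intro hi1
        have hiN : i < N := hi1
        obtain ⟨s, ρ, hcard, hρ0, hρle, hcov⟩ := ih (le_of_lt hiN)
        set B : ℝ := ((2 : ℝ) ^ ((i : ℝ) * r))⁻¹ with hB
        have hB0 : 0 < B := by
          rw [hB]; exact inv_pos.2 (Real.rpow_pos_of_pos (by norm_num) _)
        set d : ℝ := σ * B + δ with hd
        have hd0 : 0 ≤ d := by rw [hd]; positivity
        set t : ℕ := (N - i + 1) * a with ht
        obtain ⟨s', hcard', hcov'⟩ := cover_step hρ0 hd0 (u i hiN) (hu i hiN) hcov t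
        refine ⟨s', d + (2 * ρ + 2 * d) / 2 ^ t, ?_, ?_, ?_, hcov'⟩
        · calc s'.card ≤ s.card * 5 ^ (2 ^ i * t) := hcard'
            _ ≤ 5 ^ (a * S i) * 5 ^ (2 ^ i * t) := Nat.mul_le_mul_right _ hcard
            _ = 5 ^ (a * S i + 2 ^ i * t) := by rw [pow_add]
            _ = 5 ^ (a * S (i + 1)) := by
                congr 1
                have hSsucc : S (i + 1) = S i + (N - i + 1) * 2 ^ i := by
                  rw [hS]; exact Finset.sum_range_succ _ i
                rw [hSsucc, ht]
                ring
        · exact add_nonneg hd0 (div_nonneg (by linarith) (by positivity))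
        · -- numeric bound
          have hEeq : ((2 : ℝ) ^ (((i : ℝ) - 1) * r))⁻¹ = (2 : ℝ) ^ r * B := by
            rw [hB, ← Real.rpow_neg (by norm_num : (0:ℝ) ≤ 2),
              ← Real.rpow_neg (by norm_num : (0:ℝ) ≤ 2),
              ← Real.rpow_add (by norm_num : (0:ℝ) < 2)]
            congr 1
            ring
          have htar : ((2 : ℝ) ^ (((((i + 1) : ℕ) : ℝ) - 1) * r))⁻¹ = B := by
            rw [hB]
            congr 2
            push_cast
            ring
          rw [htar]
          have hq' : (1 : ℝ) ≤ (2 : ℝ) ^ r := hq1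
          have hple : 8 * (2 : ℝ) ^ r ≤ (2 : ℝ) ^ t := by
            have h8 : (8 : ℝ) = (2 : ℝ) ^ ((3 : ℝ)) := by
              rw [show (3:ℝ) = ((3:ℕ):ℝ) by norm_num, Real.rpow_natCast]; norm_num
            have hcomb : 8 * (2 : ℝ) ^ r = (2 : ℝ) ^ ((3 : ℝ) + r) := by
              rw [Real.rpow_add (by norm_num : (0:ℝ) < 2), ← h8]
            rw [hcomb, ← Real.rpow_natCast 2 t]
            apply Real.rpow_le_rpow_left_iff (by norm_num : (1:ℝ) < 2) |>.2
            have h2a : (2 * a : ℕ) ≤ t := by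
              rw [ht]
              have : 2 ≤ N - i + 1 := by omega
              nlinarith
            have : ((2 * a : ℕ) : ℝ) ≤ (t : ℝ) := by exact_mod_cast h2a
            have hceil1 : (1 : ℝ) ≤ (⌈r⌉₊ : ℝ) := by
              exact_mod_cast Nat.one_le_ceil_iff.2 hr
            have hceilr : r ≤ (⌈r⌉₊ : ℝ) := Nat.le_ceil r
            push_cast [ha] at this ⊢
            linarith
          have hstep := step_num (σ := σ) (δ := δ) (ρ := ρ) (d := d) (B := B)
            (p := (2 : ℝ) ^ t) (q := (2 : ℝ) ^ r) hσ0 hδ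
            (by rw [← hEeq]; exact hρle) (le_of_eq hd) hB0.le hq' hple
          linarith [hstep]
    -- conclude from chain at N
    obtain ⟨s, ρ, hcard, hρ0, hρle, hcov⟩ := chain N le_rfl
    have hcard2 : s.card ≤ 2 ^ k := by
      have h5 : (5 : ℕ) ^ (a * S N) ≤ 2 ^ (3 * (a * S N)) := by
        calc (5:ℕ) ^ (a * S N) ≤ 8 ^ (a * S N) := Nat.pow_le_pow_left (by norm_num) _
          _ = 2 ^ (3 * (a * S N)) := by
              rw [show (8:ℕ) = 2 ^ 3 by norm_num, ← pow_mul]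
      have hSN : 3 * (a * S N) ≤ k := by
        rcases hbits with h0 | hKN
        · have : S N = 0 := by rw [hS]; simp only; rw [h0]; simp
          rw [this]; simp
        · have hS3 : S N ≤ 3 * 2 ^ N := by
            have h1 := S_bound N
            have h2 : S N = ∑ j ∈ Finset.range N, (N - j + 1) * 2 ^ j := by
              simp only [hS]
            omega
          calc 3 * (a * S N) ≤ 3 * (a * (3 * 2 ^ N)) := by
                apply Nat.mul_le_mul_left
                exact Nat.mul_le_mul_left _ hS3
            _ = K * 2 ^ N := by rw [hK]; ring
            _ ≤ k := hKN
      calc s.card ≤ 5 ^ (a * S N) := hcard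
        _ ≤ 2 ^ (3 * (a * S N)) := h5
        _ ≤ 2 ^ k := Nat.pow_le_pow_right (by norm_num) hSN
    have hEN : ((2 : ℝ) ^ (((N : ℝ) - 1) * r))⁻¹ = (2 : ℝ) ^ r * ((2 : ℝ) ^ ((N : ℝ) * r))⁻¹ := by
      rw [← Real.rpow_neg (by norm_num : (0:ℝ) ≤ 2),
        ← Real.rpow_neg (by norm_num : (0:ℝ) ≤ 2),
        ← Real.rpow_add (by norm_num : (0:ℝ) < 2)]
      congr 1
      ring
    apply entropyNum_le_of_cover hcard2 _ _ hcov
    · rw [← hEN]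
      linarith
    · have : (0:ℝ) < (2 : ℝ) ^ r * ((2 : ℝ) ^ ((N : ℝ) * r))⁻¹ := by positivity
      nlinarith
  -- pass to the limit δ → 0
  have hek : entropyNum k F ≤ 2 * σ * ((2 : ℝ) ^ r * ((2 : ℝ) ^ ((N : ℝ) * r))⁻¹) := by
    apply le_of_forall_pos_le_add
    intro ε hε
    calc entropyNum k F ≤ 2 * σ * ((2 : ℝ) ^ r * ((2 : ℝ) ^ ((N : ℝ) * r))⁻¹) + 3 * (ε / 3) :=
          key (ε / 3) (by linarith)
      _ = _ + ε := by ring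
  -- final computation
  have hkr0 : (0:ℝ) < (k : ℝ) ^ r := Real.rpow_pos_of_pos (by exact_mod_cast hk1) _
  have hfin : (k : ℝ) ^ r * ((2 : ℝ) ^ ((N : ℝ) * r))⁻¹ ≤ (2 * (K : ℝ)) ^ r := by
    have h2N : (2 : ℝ) ^ ((N : ℝ) * r) = ((2 : ℝ) ^ (N : ℕ)) ^ r := by
      rw [Real.rpow_mul (by norm_num), Real.rpow_natCast]
    have h2N0 : (0:ℝ) < (2 : ℝ) ^ (N : ℕ) := by positivity
    have heq : (k : ℝ) ^ r * (((2:ℝ) ^ (N : ℕ)) ^ r)⁻¹ = ((k : ℝ) / (2:ℝ) ^ (N : ℕ)) ^ r := by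
      rw [Real.div_rpow (by positivity) h2N0.le, div_eq_mul_inv]
    rw [h2N, heq]
    apply Real.rpow_le_rpow (by positivity) _ hr.le
    rw [div_le_iff₀ h2N0]
    have : (k : ℝ) ≤ 2 * (K : ℝ) * (2 : ℝ) ^ (N : ℕ) := by
      exact_mod_cast hk2K.le
    linarith
  calc (k : ℝ) ^ r * entropyNum k F
      ≤ (k : ℝ) ^ r * (2 * σ * ((2 : ℝ) ^ r * ((2 : ℝ) ^ ((N : ℝ) * r))⁻¹)) :=
        mul_le_mul_of_nonneg_left hek hkr0.le
    _ = 2 * (2 : ℝ) ^ r * σ * ((k : ℝ) ^ r * ((2 : ℝ) ^ ((N : ℝ) * r))⁻¹) := by ring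
    _ ≤ 2 * (2 : ℝ) ^ r * σ * (2 * (K : ℝ)) ^ r := by
        apply mul_le_mul_of_nonneg_left hfin
        positivity
    _ = 2 * (2 : ℝ) ^ r * (2 * (K : ℝ)) ^ r * σ := by ring
end

section
/- Novak's inequality: let Ω be a compact metric space with a probability measure μ and F a compact subset of C(Ω). Then the optimal error of numerical integration with m knots satisfies κ_m(F) ≤ 2 d_m(F, L_∞), where κ_m(F) := inf over points ξ^1,...,ξ^m ∈ Ω and weights λ_1,...,λ_m of sup_{f∈F} |∫_Ω f dμ − Σ_{j=1}^m λ_j f(ξ^j)|. -/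
open MeasureTheory
open scoped BigOperators

/-- The Kolmogorov width `d_m(F, L_∞)` of a set of continuous functions on a compact
space, with respect to the uniform norm. -/
noncomputable def kolWidthC {Ω : Type*} [TopologicalSpace Ω] [CompactSpace Ω]
    (m : ℕ) (A : Set C(Ω, ℝ)) : ℝ :=
  ⨅ u : Fin m → C(Ω, ℝ), ⨆ f ∈ A, ⨅ c : Fin m → ℝ, ‖f - ∑ i, c i • u i‖

/-- The optimal error of numerical integration with `m` knots:
`κ_m(F) = inf_{ξ, λ} sup_{f ∈ F} |∫ f dμ - ∑_j λ_j f(ξ^j)|`. -/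
noncomputable def kappa {Ω : Type*} [MetricSpace Ω] [CompactSpace Ω] [MeasurableSpace Ω]
    (μ : Measure Ω) (m : ℕ) (F : Set C(Ω, ℝ)) : ℝ :=
  ⨅ ξ : Fin m → Ω, ⨅ w : Fin m → ℝ, ⨆ f ∈ F, |(∫ x, f x ∂μ) - ∑ j, w j * f (ξ j)|

/-!
Fix `u₁, …, u_m ∈ C(Ω)` and put `T x = (u₁ x, …, u_m x) ∈ ℝ^m`. The mean `∫ T dμ` lies in the
convex hull of the compact set `T(Ω)`. Carathéodory's theorem writes it as a convex combination
of `m + 1` points `T(ξⱼ)`, and moving along a linear dependence among these points kills one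
weight without making any weight negative or increasing their sum. This gives nodes `ξ₁, …, ξ_m`
and weights `wⱼ ≥ 0` with `∑ wⱼ ≤ 1` whose quadrature is exact on `span {uᵢ}`. Its error
functional has norm at most `1 + ∑ wⱼ ≤ 2`, so the error on `f` is at most twice the uniform
distance from `f` to that span.
-/

section ConvexCombination

variable {E : Type*} [AddCommGroup E] [Module ℝ E]

theorem exists_fin_combination_of_card_le {ι : Type*} [Fintype ι] {N : ℕ}
    (hN : Fintype.card ι ≤ N) {s : Set E} (hs : s.Nonempty) {z : ι → E} (hz : ∀ i, z i ∈ s)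
    {w : ι → ℝ} (hw : ∀ i, 0 ≤ w i) :
    ∃ (z' : Fin N → E) (w' : Fin N → ℝ), (∀ j, z' j ∈ s) ∧ (∀ j, 0 ≤ w' j) ∧
      ∑ j, w' j = ∑ i, w i ∧ ∑ j, w' j • z' j = ∑ i, w i • z i := by
  obtain ⟨e⟩ := Function.Embedding.nonempty_of_card_le (β := Fin N) (by simpa using hN)
  obtain ⟨s₀, hs₀⟩ := hs
  have hoff : ∀ j ∉ Set.range e, Function.extend e w 0 j = 0 := fun j hj =>
    Function.extend_apply' _ _ _ hj
  refine ⟨Function.extend e z fun _ => s₀, Function.extend e w 0, fun j => ?_, fun j => ?_,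
    (Fintype.sum_of_injective e e.injective _ _ hoff fun i => ?_).symm,
    (Fintype.sum_of_injective e e.injective _ _ (fun j hj => by simp [hoff j hj]) fun i => ?_).symm⟩
  · by_cases hj : ∃ i, e i = j
    · obtain ⟨i, rfl⟩ := hj
      simpa [e.injective.extend_apply] using hz i
    · simpa [Function.extend_apply' _ _ _ hj] using hs₀
  · by_cases hj : ∃ i, e i = j
    · obtain ⟨i, rfl⟩ := hj
      simpa [e.injective.extend_apply] using hw i
    · simp [Function.extend_apply' _ _ _ hj]
  · simp [e.injective.extend_apply]
  · simp [e.injective.extend_apply]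

variable [FiniteDimensional ℝ E]

theorem exists_fin_convex_combination_of_mem_convexHull {s : Set E} {x : E}
    (hx : x ∈ convexHull ℝ s) :
    ∃ (z : Fin (Module.finrank ℝ E + 1) → E) (w : Fin (Module.finrank ℝ E + 1) → ℝ),
      (∀ j, z j ∈ s) ∧ (∀ j, 0 ≤ w j) ∧ ∑ j, w j = 1 ∧ ∑ j, w j • z j = x := by
  obtain ⟨ι, _, z, w, hzs, hz, hw, hw1, rfl⟩ := eq_pos_convex_span_of_mem_convexHull hx
  have hcard : Fintype.card ι ≤ Module.finrank ℝ E + 1 :=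
    hz.card_le_finrank_succ.trans (Nat.succ_le_succ (Submodule.finrank_le _))
  obtain ⟨z', w', hz', hw', hsum, hcomb⟩ := exists_fin_combination_of_card_le hcard
    (convexHull_nonempty_iff.mp ⟨_, hx⟩) (fun i => hzs (Set.mem_range_self i)) fun i => (hw i).le
  exact ⟨z', w', hz', hw', hsum.trans hw1, hcomb⟩

theorem IsCompact.convexHull [TopologicalSpace E] [ContinuousAdd E] [ContinuousSMul ℝ E]
    {s : Set E} (hs : IsCompact s) : IsCompact (convexHull ℝ s) := by
  set n := Module.finrank ℝ E + 1
  have hhull : _root_.convexHull ℝ s =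
      (fun p : (Fin n → ℝ) × (Fin n → E) => ∑ j, p.1 j • p.2 j) ''
        (stdSimplex ℝ (Fin n) ×ˢ Set.univ.pi fun _ => s) := by
    refine subset_antisymm (fun x hx => ?_) ?_
    · obtain ⟨z, w, hz, hw, hw1, rfl⟩ := exists_fin_convex_combination_of_mem_convexHull hx
      exact ⟨(w, z), ⟨⟨hw, hw1⟩, fun j _ => hz j⟩, rfl⟩
    · rintro _ ⟨⟨w, z⟩, ⟨⟨hw, hw1⟩, hz⟩, rfl⟩
      exact (convex_convexHull ℝ s).sum_mem (fun j _ => hw j) hw1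
        fun j _ => subset_convexHull ℝ s (hz j (Set.mem_univ j))
  rw [hhull]
  exact ((isCompact_stdSimplex _ _).prod (isCompact_univ_pi fun _ => hs)).image (by fun_prop)

theorem exists_sum_smul_eq_zero_of_finrank_lt {ι : Type*} [Fintype ι] {v : ι → E}
    (h : Module.finrank ℝ E < Fintype.card ι) :
    ∃ c : ι → ℝ, ∑ i, c i • v i = 0 ∧ 0 ≤ ∑ i, c i ∧ ∃ i, 0 < c i := by
  obtain ⟨g, hg, i, hi⟩ := Fintype.not_linearIndependent_iff.mp fun hv =>
    h.not_ge hv.fintype_card_le_finrank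
  obtain ⟨c, hc, hsum, hci⟩ : ∃ c : ι → ℝ, ∑ i, c i • v i = 0 ∧ 0 ≤ ∑ i, c i ∧ c i ≠ 0 := by
    rcases le_total 0 (∑ i, g i) with hg0 | hg0
    · exact ⟨g, hg, hg0, hi⟩
    · exact ⟨-g, by simp [hg], by simpa using hg0, by simpa using hi⟩
  refine ⟨c, hc, hsum, ?_⟩
  by_contra! hneg
  have hzero : ∑ j, c j = 0 := le_antisymm (Finset.sum_nonpos fun j _ => hneg j) hsum
  exact hci ((Finset.sum_eq_zero_iff_of_nonpos fun j _ => hneg j).mp hzero i (Finset.mem_univ i))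

theorem exists_nonneg_combination_eq_zero_at_of_finrank_lt {ι : Type*} [Fintype ι] {v : ι → E}
    (h : Module.finrank ℝ E < Fintype.card ι) {w : ι → ℝ} (hw : ∀ i, 0 ≤ w i) :
    ∃ (w' : ι → ℝ) (i₀ : ι), (∀ i, 0 ≤ w' i) ∧ w' i₀ = 0 ∧ ∑ i, w' i ≤ ∑ i, w i ∧
      ∑ i, w' i • v i = ∑ i, w i • v i := by
  obtain ⟨c, hc, hsum, i₁, hi₁⟩ := exists_sum_smul_eq_zero_of_finrank_lt (v := v) h
  -- Move along `-c` until the first weight hits zero.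
  obtain ⟨i₀, hi₀, hmin⟩ := ({i | 0 < c i} : Finset ι).exists_min_image (fun i => w i / c i)
    ⟨i₁, by simpa using hi₁⟩
  replace hi₀ : 0 < c i₀ := by simpa using hi₀
  set t := w i₀ / c i₀
  have ht : 0 ≤ t := div_nonneg (hw i₀) hi₀.le
  refine ⟨fun i => w i - t * c i, i₀, fun i => ?_, by simp [t, hi₀.ne'], ?_, ?_⟩
  · rcases le_or_gt (c i) 0 with hci | hci
    · nlinarith [hw i]
    · have := hmin i (by simpa using hci)
      rw [div_le_div_iff₀ hi₀ hci] at this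
      simp only [t, sub_nonneg, div_mul_eq_mul_div, div_le_iff₀ hi₀]
      linarith
  · simp only [Finset.sum_sub_distrib, ← Finset.mul_sum]
    nlinarith
  · simp only [sub_smul, Finset.sum_sub_distrib, mul_smul, ← Finset.smul_sum, hc, smul_zero,
      sub_zero]

theorem exists_fin_finrank_combination_of_mem_convexHull {s : Set E} {x : E}
    (hx : x ∈ convexHull ℝ s) :
    ∃ (z : Fin (Module.finrank ℝ E) → E) (w : Fin (Module.finrank ℝ E) → ℝ),
      (∀ j, z j ∈ s) ∧ (∀ j, 0 ≤ w j) ∧ ∑ j, w j ≤ 1 ∧ ∑ j, w j • z j = x := by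
  obtain ⟨z, w, hz, hw, hw1, rfl⟩ := exists_fin_convex_combination_of_mem_convexHull hx
  obtain ⟨w', i₀, hw', hi₀, hsum, hcomb⟩ :=
    exists_nonneg_combination_eq_zero_at_of_finrank_lt (v := z) (by simp) hw
  refine ⟨fun j => z (i₀.succAbove j), fun j => w' (i₀.succAbove j), fun j => hz _,
    fun j => hw' _, ?_, ?_⟩
  · rw [← hw1]
    simpa [Fin.sum_univ_succAbove _ i₀, hi₀] using hsum
  · simpa [Fin.sum_univ_succAbove _ i₀, hi₀] using hcomb

end ConvexCombination

section Quadrature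

variable {Ω : Type*} [TopologicalSpace Ω] [CompactSpace Ω] [MeasurableSpace Ω]
  [OpensMeasurableSpace Ω]

theorem integral_mem_convexHull_range {E : Type*} [NormedAddCommGroup E] [NormedSpace ℝ E]
    [FiniteDimensional ℝ E] (μ : Measure Ω) [IsProbabilityMeasure μ] {T : Ω → E}
    (hT : Continuous T) : ∫ x, T x ∂μ ∈ convexHull ℝ (Set.range T) :=
  (convex_convexHull ℝ _).integral_mem (isCompact_range hT).convexHull.isClosed
    (ae_of_all _ fun x => subset_convexHull ℝ _ (Set.mem_range_self x))
    (hT.integrable_of_hasCompactSupport (.of_compactSpace _))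

theorem ContinuousMap.integrable_of_compactSpace (μ : Measure Ω) [IsFiniteMeasure μ]
    (f : C(Ω, ℝ)) : Integrable f μ :=
  f.continuous.integrable_of_hasCompactSupport (.of_compactSpace _)

noncomputable def quadratureError (μ : Measure Ω) [IsFiniteMeasure μ] {ι : Type*} [Fintype ι]
    (ξ : ι → Ω) (w : ι → ℝ) : C(Ω, ℝ) →ₗ[ℝ] ℝ where
  toFun f := ∫ x, f x ∂μ - ∑ j, w j * f (ξ j)
  map_add' f g := by
    simp only [ContinuousMap.add_apply, integral_add (f.integrable_of_compactSpace μ)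
      (g.integrable_of_compactSpace μ), mul_add, Finset.sum_add_distrib]
    ring
  map_smul' c f := by
    simp only [ContinuousMap.smul_apply, smul_eq_mul, integral_const_mul, RingHom.id_apply,
      mul_left_comm (w _), ← Finset.mul_sum, mul_sub]

variable (μ : Measure Ω) [IsProbabilityMeasure μ] {ι : Type*} [Fintype ι]

theorem abs_quadratureError_le {ξ : ι → Ω} {w : ι → ℝ} (hw : ∀ j, 0 ≤ w j) (f : C(Ω, ℝ)) :
    |quadratureError μ ξ w f| ≤ (1 + ∑ j, w j) * ‖f‖ := by
  have hint : |∫ x, f x ∂μ| ≤ ‖f‖ := by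
    simpa using norm_integral_le_of_norm_le_const (μ := μ) (ae_of_all _ f.norm_coe_le_norm)
  have hsum : |∑ j, w j * f (ξ j)| ≤ (∑ j, w j) * ‖f‖ := by
    calc |∑ j, w j * f (ξ j)| ≤ ∑ j, |w j * f (ξ j)| := Finset.abs_sum_le_sum_abs _ _
      _ ≤ ∑ j, w j * ‖f‖ := Finset.sum_le_sum fun j _ => by
          rw [abs_mul, abs_of_nonneg (hw j)]
          exact mul_le_mul_of_nonneg_left (f.norm_coe_le_norm _) (hw j)
      _ = (∑ j, w j) * ‖f‖ := (Finset.sum_mul _ _ _).symm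
  calc |quadratureError μ ξ w f| ≤ |∫ x, f x ∂μ| + |∑ j, w j * f (ξ j)| := abs_sub _ _
    _ ≤ (1 + ∑ j, w j) * ‖f‖ := by linarith

theorem exists_quadratureError_eq_zero {m : ℕ} (u : Fin m → C(Ω, ℝ)) :
    ∃ (ξ : Fin m → Ω) (w : Fin m → ℝ), (∀ j, 0 ≤ w j) ∧ ∑ j, w j ≤ 1 ∧
      ∀ i, quadratureError μ ξ w (u i) = 0 := by
  set T : Ω → (Fin m → ℝ) := fun x i => u i x
  have hT : Continuous T := continuous_pi fun i => (u i).continuous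
  have hb := exists_fin_finrank_combination_of_mem_convexHull (integral_mem_convexHull_range μ hT)
  rw [Module.finrank_fin_fun] at hb
  obtain ⟨z, w, hz, hw, hw1, hzw⟩ := hb
  choose ξ hξ using hz
  refine ⟨ξ, w, hw, hw1, fun i => ?_⟩
  have hi := congrFun hzw i
  rw [eval_integral fun i => (u i).integrable_of_compactSpace μ] at hi
  simp [quadratureError, ← hi, ← hξ, T]

theorem abs_quadratureError_le_two_mul_iInf {m : ℕ} {u : Fin m → C(Ω, ℝ)} {ξ : ι → Ω}
    {w : ι → ℝ} (hw : ∀ j, 0 ≤ w j) (hw1 : ∑ j, w j ≤ 1)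
    (hexact : ∀ i, quadratureError μ ξ w (u i) = 0) (f : C(Ω, ℝ)) :
    |quadratureError μ ξ w f| ≤ 2 * ⨅ c : Fin m → ℝ, ‖f - ∑ i, c i • u i‖ := by
  rw [Real.mul_iInf_of_nonneg zero_le_two]
  refine le_ciInf fun c => ?_
  have hspan : quadratureError μ ξ w (∑ i, c i • u i) = 0 := by simp [hexact]
  calc |quadratureError μ ξ w f| = |quadratureError μ ξ w (f - ∑ i, c i • u i)| := by
        rw [map_sub, hspan, sub_zero]
    _ ≤ (1 + ∑ j, w j) * ‖f - ∑ i, c i • u i‖ := abs_quadratureError_le μ hw _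
    _ ≤ 2 * ‖f - ∑ i, c i • u i‖ := by gcongr; linarith

theorem iSup_abs_quadratureError_le_two_mul {F : Set C(Ω, ℝ)} (hF : Bornology.IsBounded F)
    {m : ℕ} {u : Fin m → C(Ω, ℝ)} {ξ : ι → Ω} {w : ι → ℝ} (hw : ∀ j, 0 ≤ w j)
    (hw1 : ∑ j, w j ≤ 1) (hexact : ∀ i, quadratureError μ ξ w (u i) = 0) :
    ⨆ f ∈ F, |quadratureError μ ξ w f| ≤
      2 * ⨆ f ∈ F, ⨅ c : Fin m → ℝ, ‖f - ∑ i, c i • u i‖ := by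
  set D : C(Ω, ℝ) → ℝ := fun f => ⨅ c : Fin m → ℝ, ‖f - ∑ i, c i • u i‖
  have hD0 : ∀ f, 0 ≤ D f := fun f => Real.iInf_nonneg fun _ => norm_nonneg _
  have hDle : ∀ f, D f ≤ ‖f‖ := fun f =>
    (ciInf_le ⟨0, by rintro _ ⟨c, rfl⟩; exact norm_nonneg _⟩ 0).trans_eq (by simp)
  obtain ⟨R, hR⟩ := isBounded_iff_forall_norm_le.mp hF
  have hbdd : BddAbove (⋃ f, Set.range fun _ : f ∈ F => D f) := by
    refine ⟨R, ?_⟩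
    simp only [mem_upperBounds, Set.mem_iUnion, Set.mem_range]
    rintro _ ⟨f, hf, rfl⟩
    exact (hDle f).trans (hR f hf)
  have hsup0 : 0 ≤ 2 * ⨆ f ∈ F, D f :=
    mul_nonneg zero_le_two (Real.iSup_nonneg fun f => Real.iSup_nonneg fun _ => hD0 f)
  refine Real.iSup_le (fun f => Real.iSup_le (fun hf => ?_) hsup0) hsup0
  exact (abs_quadratureError_le_two_mul_iInf μ hw hw1 hexact f).trans
    (mul_le_mul_of_nonneg_left (le_ciSup₂ (f := fun f _ => D f) hbdd f hf) zero_le_two)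

end Quadrature

theorem kappa_le_iSup_abs_quadratureError {Ω : Type*} [MetricSpace Ω] [CompactSpace Ω]
    [MeasurableSpace Ω] [OpensMeasurableSpace Ω] (μ : Measure Ω) [IsFiniteMeasure μ] {m : ℕ}
    (F : Set C(Ω, ℝ)) (ξ : Fin m → Ω) (w : Fin m → ℝ) :
    kappa μ m F ≤ ⨆ f ∈ F, |quadratureError μ ξ w f| := by
  have h0 : ∀ (ξ : Fin m → Ω) (w : Fin m → ℝ), 0 ≤ ⨆ f ∈ F, |quadratureError μ ξ w f| :=
    fun ξ w => Real.iSup_nonneg fun _ => Real.iSup_nonneg fun _ => abs_nonneg _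
  refine ciInf_le_of_le ⟨0, ?_⟩ ξ (ciInf_le_of_le ⟨0, ?_⟩ w le_rfl)
  · rintro _ ⟨ξ', rfl⟩
    exact Real.iInf_nonneg (h0 ξ')
  · rintro _ ⟨w', rfl⟩
    exact h0 ξ w'

/-- Novak's inequality: for a compact metric space `Ω` with a Borel probability
measure `μ` and a compact `F ⊆ C(Ω)`, `κ_m(F) ≤ 2 d_m(F, L_∞)`. -/
theorem novak_inequality {Ω : Type*} [MetricSpace Ω] [CompactSpace Ω]
    [MeasurableSpace Ω] [BorelSpace Ω] (μ : Measure Ω) [IsProbabilityMeasure μ]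
    (F : Set C(Ω, ℝ)) (hF : IsCompact F) (m : ℕ) :
    kappa μ m F ≤ 2 * kolWidthC m F := by
  suffices h : ∀ u : Fin m → C(Ω, ℝ),
      kappa μ m F / 2 ≤ ⨆ f ∈ F, ⨅ c : Fin m → ℝ, ‖f - ∑ i, c i • u i‖ by
    linarith [show kappa μ m F / 2 ≤ kolWidthC m F from le_ciInf h]
  intro u
  obtain ⟨ξ, w, hw, hw1, hexact⟩ := exists_quadratureError_eq_zero μ u
  linarith [(kappa_le_iSup_abs_quadratureError μ F ξ w).trans
    (iSup_abs_quadratureError_le_two_mul μ hF.isBounded hw hw1 hexact)]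
end

section
/- Nikol'skii inequality for hyperbolic crosses in terms of the H_p-norm: there is a constant C(d,p) such that for every n ∈ ℕ and every trigonometric polynomial f with frequencies in the stepped hyperbolic cross Q_n := ∪_{‖s‖_1 ≤ n} ρ(s), one has ‖f‖_∞ ≤ C(d,p) 2^{n/p} n^{d−1} max_{‖s‖_1 ≤ n} ‖δ_s(f)‖_p, where δ_s(f) is the part of the Fourier series of f with frequencies in ρ(s). -/
open MeasureTheory Filter
open scoped BigOperators ENNReal Classical Real

noncomputable section

instance : Fact (0 < 2 * Real.pi) := ⟨by positivity⟩

/-- The `d`-dimensional torus `𝕋^d`, realized as `(ℝ/2πℤ)^d`. -/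
abbrev Torus (d : ℕ) := Fin d → AddCircle (2 * Real.pi)

/-- The character `e^{i(k,x)}` on the torus. -/
def charF {d : ℕ} (k : Fin d → ℤ) (x : Torus d) : ℂ :=
  ∏ j, fourier (k j) (x j)

/-- The `L_p` norm on the torus (`p = ∞` gives the essential sup norm). -/
def Lnorm {d : ℕ} (p : ℝ≥0∞) (f : Torus d → ℂ) : ℝ :=
  (eLpNorm f p volume).toReal

/-- The dyadic block `ρ(s) = {k : [2^{s_j-1}] ≤ |k_j| < 2^{s_j}}`. -/
def rho (d : ℕ) (s : Fin d → ℕ) : Set (Fin d → ℤ) :=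
  {k | ∀ j, ((2 : ℤ) ^ (s j)) / 2 ≤ |k j| ∧ |k j| < (2 : ℤ) ^ (s j)}

/-- The stepped hyperbolic cross `Q_n = ∪_{‖s‖₁ ≤ n} ρ(s)`. -/
def QSet (d n : ℕ) : Set (Fin d → ℤ) :=
  ⋃ s ∈ {s : Fin d → ℕ | ∑ j, s j ≤ n}, rho d s

/-- Trigonometric polynomials with frequencies in `Q`. -/
def trig (d : ℕ) (Q : Set (Fin d → ℤ)) : Set (Torus d → ℂ) :=
  {f | ∃ c : (Fin d → ℤ) → ℂ, (Function.support c).Finite ∧ Function.support c ⊆ Q ∧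
        ∀ x, f x = ∑' k, c k * charF k x}

/-- The unit `L_p` ball of `trig d Q`. -/
def trigBall (d : ℕ) (Q : Set (Fin d → ℤ)) (p : ℝ≥0∞) : Set (Torus d → ℂ) :=
  {f | f ∈ trig d Q ∧ Lnorm p f ≤ 1}

/-- The Kolmogorov width `d_m(A, L_∞)` of a set of functions on the torus, in the
uniform norm. -/
def kolW {d : ℕ} (m : ℕ) (A : Set (Torus d → ℂ)) : ℝ :=
  ⨅ u : Fin m → Torus d → ℂ, ⨆ f ∈ A, ⨅ c : Fin m → ℂ, Lnorm ⊤ (f - ∑ i, c i • u i)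


/-- The dyadic piece `δ_s(f)` of the Fourier series with coefficients `c`:
the part with frequencies in `ρ(s)`. -/
def deltaS (d : ℕ) (s : Fin d → ℕ) (c : (Fin d → ℤ) → ℂ) : Torus d → ℂ :=
  fun x => ∑' k : Fin d → ℤ, (if k ∈ rho d s then c k else 0) * charF k x

/-! The one-block Nikol'skii inequality `‖δ_s f‖_∞ ≲ 2^{‖s‖₁/p} ‖δ_s f‖_p` comes from a power
trick: for an integer `r ≥ p`, `(δ_s f)^r` is a trigonometric polynomial whose spectrum lies in a
box of at most `(2r)^d 2^{‖s‖₁}` frequencies, so the `L₁ → L_∞` bound `‖h‖_∞ ≲ #spec(h) ‖h‖₁`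
applied to it gives `‖δ_s f‖_∞^r ≲ 2^{‖s‖₁} ‖δ_s f‖_∞^{r-p} ‖δ_s f‖_p^p`.
Summing this over the blocks of `f = ∑_{‖s‖₁ ≤ n} δ_s f`, and using that at most `(m+1)^{d-1}`
vectors `s` have `‖s‖₁ = m`, gives `‖f‖_∞ ≲ ∑_{m ≤ n} n^{d-1} 2^{m/p} ≲ n^{d-1} 2^{n/p}`. -/

open ComplexConjugate

section Characters

variable {d : ℕ}

lemma continuous_charF (k : Fin d → ℤ) : Continuous (charF k) :=
  continuous_finsetProd _ fun j _ => (fourier (k j)).continuous.comp (continuous_apply j)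

lemma norm_charF (k : Fin d → ℤ) (x : Torus d) : ‖charF k x‖ = 1 := by
  simp only [charF, norm_prod, fourier_apply, Circle.norm_coe, Finset.prod_const_one]

lemma charF_add (k l : Fin d → ℤ) (x : Torus d) : charF (k + l) x = charF k x * charF l x := by
  simp only [charF, ← Finset.prod_mul_distrib, Pi.add_apply, fourier_add]

lemma charF_mul_conj (k l : Fin d → ℤ) (x : Torus d) :
    charF k x * conj (charF l x) = charF (k - l) x := by
  simp only [charF, map_prod, ← Finset.prod_mul_distrib, ← fourier_neg, ← fourier_add,
    Pi.sub_apply, sub_eq_add_neg]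

lemma integral_fourier {T : ℝ} [hT : Fact (0 < T)] (m : ℤ) :
    ∫ x : AddCircle T, fourier m x = if m = 0 then (T : ℂ) else 0 := by
  split_ifs with hm
  · simp [hm, measureReal_def, AddCircle.measure_univ, hT.out.le]
  · exact integral_eq_zero_of_add_right_eq_neg (fourier_add_half_inv_index hm hT.out)

lemma integral_charF (m : Fin d → ℤ) :
    ∫ x : Torus d, charF m x = if m = 0 then ((2 * π : ℝ) : ℂ) ^ d else 0 := by
  unfold charF
  rw [volume_pi, integral_fintype_prod_eq_prod
    (f := fun j (y : AddCircle (2 * π)) => fourier (m j) y)]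
  simp_rw [integral_fourier]
  split_ifs with hm
  · simp [hm]
  · obtain ⟨j, hj⟩ := Function.ne_iff.mp hm
    exact Finset.prod_eq_zero (Finset.mem_univ j) (if_neg hj)

end Characters

section TrigPoly

variable {d : ℕ}

def trigPoly (F : Finset (Fin d → ℤ)) (a : (Fin d → ℤ) → ℂ) (x : Torus d) : ℂ :=
  ∑ k ∈ F, a k * charF k x

lemma continuous_trigPoly (F : Finset (Fin d → ℤ)) (a : (Fin d → ℤ) → ℂ) :
    Continuous (trigPoly F a) :=
  continuous_finsetSum _ fun k _ => continuous_const.mul (continuous_charF k)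

lemma tsum_eq_trigPoly {F : Finset (Fin d → ℤ)} {a : (Fin d → ℤ) → ℂ}
    (h : Function.support a ⊆ F) (x : Torus d) :
    ∑' k, a k * charF k x = trigPoly F a x :=
  tsum_eq_sum fun k hk => by rw [Function.notMem_support.mp fun hs => hk (h hs), zero_mul]

lemma integral_trigPoly_mul_conj {F : Finset (Fin d → ℤ)} (a : (Fin d → ℤ) → ℂ)
    {k : Fin d → ℤ} (hk : k ∈ F) :
    ∫ x, trigPoly F a x * conj (charF k x) = a k * ((2 * π : ℝ) : ℂ) ^ d := by
  simp_rw [trigPoly, Finset.sum_mul, mul_assoc, charF_mul_conj]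
  rw [integral_finsetSum _ fun l _ =>
    (((continuous_charF (l - k)).const_mul (a l)).integrable_of_hasCompactSupport
      (.of_compactSpace _))]
  simp_rw [integral_const_mul, integral_charF, sub_eq_zero, mul_ite, mul_zero]
  rw [Finset.sum_ite_eq' F k, if_pos hk]

lemma norm_coeff_mul_le_integral {F : Finset (Fin d → ℤ)} (a : (Fin d → ℤ) → ℂ)
    {k : Fin d → ℤ} (hk : k ∈ F) :
    ‖a k‖ * (2 * π) ^ d ≤ ∫ x, ‖trigPoly F a x‖ :=
  calc ‖a k‖ * (2 * π) ^ d = ‖∫ x, trigPoly F a x * conj (charF k x)‖ := by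
        rw [integral_trigPoly_mul_conj a hk, norm_mul, norm_pow, Complex.norm_real,
          Real.norm_of_nonneg (by positivity)]
    _ ≤ ∫ x, ‖trigPoly F a x * conj (charF k x)‖ := norm_integral_le_integral_norm _
    _ = ∫ x, ‖trigPoly F a x‖ := by simp_rw [norm_mul, RCLike.norm_conj, norm_charF, mul_one]

lemma norm_trigPoly_mul_le_card_mul_integral (F : Finset (Fin d → ℤ)) (a : (Fin d → ℤ) → ℂ)
    (x : Torus d) :
    ‖trigPoly F a x‖ * (2 * π) ^ d ≤ F.card * ∫ y, ‖trigPoly F a y‖ :=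
  calc ‖trigPoly F a x‖ * (2 * π) ^ d ≤ (∑ k ∈ F, ‖a k‖) * (2 * π) ^ d := by
        gcongr
        refine (norm_sum_le _ _).trans_eq (Finset.sum_congr rfl fun k _ => ?_)
        rw [norm_mul, norm_charF, mul_one]
    _ ≤ ∑ _k ∈ F, ∫ y, ‖trigPoly F a y‖ := by
        rw [Finset.sum_mul]
        exact Finset.sum_le_sum fun k hk => norm_coeff_mul_le_integral a hk
    _ = F.card * ∫ y, ‖trigPoly F a y‖ := by rw [Finset.sum_const, nsmul_eq_mul]

lemma exists_trigPoly_eq_of_subset {F G : Finset (Fin d → ℤ)} (h : F ⊆ G)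
    (a : (Fin d → ℤ) → ℂ) : ∃ b, trigPoly F a = trigPoly G b := by
  refine ⟨fun k => if k ∈ F then a k else 0, funext fun x => ?_⟩
  rw [trigPoly, trigPoly, ← Finset.sum_subset h fun k _ hk => by simp [hk]]
  exact Finset.sum_congr rfl fun k hk => by rw [if_pos hk]

open scoped Pointwise in
lemma exists_trigPoly_mul_eq (F G : Finset (Fin d → ℤ)) (a b : (Fin d → ℤ) → ℂ) :
    ∃ e, trigPoly F a * trigPoly G b = trigPoly (F + G) e := by
  refine ⟨fun m => ∑ kl ∈ (F ×ˢ G).filter (fun kl => kl.1 + kl.2 = m), a kl.1 * b kl.2,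
    funext fun x => ?_⟩
  have hmaps : ∀ kl ∈ F ×ˢ G, kl.1 + kl.2 ∈ F + G := fun kl hkl =>
    Finset.add_mem_add (Finset.mem_product.mp hkl).1 (Finset.mem_product.mp hkl).2
  calc trigPoly F a x * trigPoly G b x
      = ∑ kl ∈ F ×ˢ G, a kl.1 * b kl.2 * charF (kl.1 + kl.2) x := by
        rw [trigPoly, trigPoly, Finset.sum_mul_sum, Finset.sum_product]
        refine Finset.sum_congr rfl fun k _ => Finset.sum_congr rfl fun l _ => ?_
        rw [charF_add]
        ring
    _ = trigPoly (F + G) _ x := by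
        rw [trigPoly, ← Finset.sum_fiberwise_of_maps_to hmaps]
        refine Finset.sum_congr rfl fun m _ => ?_
        rw [Finset.sum_mul]
        exact Finset.sum_congr rfl fun kl hkl => by rw [(Finset.mem_filter.mp hkl).2]

end TrigPoly

section Boxes

variable {d : ℕ}

def box (s : Fin d → ℕ) (R : ℕ) : Finset (Fin d → ℤ) :=
  Fintype.piFinset fun j => Finset.Ioo (-(R * 2 ^ s j : ℤ)) (R * 2 ^ s j)

lemma mem_box {s : Fin d → ℕ} {R : ℕ} {k : Fin d → ℤ} :
    k ∈ box s R ↔ ∀ j, |k j| < R * 2 ^ s j := by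
  simp only [box, Fintype.mem_piFinset, Finset.mem_Ioo, abs_lt]

lemma card_box_le (s : Fin d → ℕ) (R : ℕ) :
    (box s R).card ≤ (2 * R) ^ d * 2 ^ ∑ j, s j := by
  rw [box, Fintype.card_piFinset]
  calc ∏ j, (Finset.Ioo (-(R * 2 ^ s j : ℤ)) (R * 2 ^ s j)).card ≤ ∏ j, 2 * R * 2 ^ s j :=
        Finset.prod_le_prod' fun j _ => by
          rw [Int.card_Ioo, Int.toNat_le]
          push_cast
          linarith
    _ = (2 * R) ^ d * 2 ^ ∑ j, s j := by
        rw [Finset.prod_mul_distrib, Fin.prod_const, Finset.prod_pow_eq_pow_sum]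

open scoped Pointwise in
lemma box_add_box_subset (s : Fin d → ℕ) (R₁ R₂ : ℕ) :
    box s R₁ + box s R₂ ⊆ box s (R₁ + R₂) := by
  intro m hm
  obtain ⟨k, hk, l, hl, rfl⟩ := Finset.mem_add.mp hm
  rw [mem_box] at hk hl ⊢
  intro j
  push_cast
  calc |k j + l j| ≤ |k j| + |l j| := abs_add_le _ _
    _ < R₁ * 2 ^ s j + R₂ * 2 ^ s j := add_lt_add (hk j) (hl j)
    _ = (R₁ + R₂) * 2 ^ s j := by ring

lemma exists_trigPoly_box_pow_eq (s : Fin d → ℕ) (a : (Fin d → ℤ) → ℂ) {r : ℕ} (hr : r ≠ 0) :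
    ∃ b, trigPoly (box s 1) a ^ r = trigPoly (box s r) b := by
  induction r with
  | zero => exact absurd rfl hr
  | succ r ih =>
    rcases eq_or_ne r 0 with rfl | hr₀
    · exact ⟨a, pow_one _⟩
    obtain ⟨b, hb⟩ := ih hr₀
    obtain ⟨e, he⟩ := exists_trigPoly_mul_eq (box s r) (box s 1) b a
    obtain ⟨e', he'⟩ := exists_trigPoly_eq_of_subset (box_add_box_subset s r 1) e
    exact ⟨e', by rw [pow_succ, hb, he, he']⟩

lemma le_of_two_pow_div_two_le_of_lt_two_pow {a b : ℕ} {x : ℤ} (h₁ : 2 ^ b / 2 ≤ x)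
    (h₂ : x < 2 ^ a) : b ≤ a := by
  by_contra! h
  have : (2 : ℤ) ^ a ≤ 2 ^ b / 2 := by
    rw [Int.le_ediv_iff_mul_le two_pos, ← pow_succ]
    exact pow_le_pow_right₀ one_le_two h
  omega

lemma eq_of_mem_rho {k : Fin d → ℤ} {s s' : Fin d → ℕ} (h : k ∈ rho d s) (h' : k ∈ rho d s') :
    s = s' :=
  funext fun j => le_antisymm (le_of_two_pow_div_two_le_of_lt_two_pow (h j).1 (h' j).2)
    (le_of_two_pow_div_two_le_of_lt_two_pow (h' j).1 (h j).2)

lemma rho_subset_box (s : Fin d → ℕ) : rho d s ⊆ box s 1 := fun k hk =>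
  mem_box.mpr fun j => by simpa using (hk j).2

end Boxes

section Nikolskii

variable {d : ℕ}

lemma Lnorm_ofReal_eq_integral {g : Torus d → ℂ} (hg : Continuous g) {p : ℝ} (hp : 0 < p) :
    Lnorm (ENNReal.ofReal p) g = (∫ x, ‖g x‖ ^ p) ^ p⁻¹ := by
  rw [Lnorm, (hg.memLp_of_hasCompactSupport (.of_compactSpace g)).eLpNorm_eq_integral_rpow_norm
    (ENNReal.ofReal_pos.mpr hp).ne' ENNReal.ofReal_ne_top, ENNReal.toReal_ofReal hp.le,
    ENNReal.toReal_ofReal (by positivity)]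

lemma norm_rpow_mul_le_of_pow_eq_trigPoly {g : Torus d → ℂ} (hg : Continuous g) {p : ℝ}
    (hp : 0 < p) {r : ℕ} (hpr : p ≤ r) {G : Finset (Fin d → ℤ)} {b : (Fin d → ℤ) → ℂ}
    (hgr : g ^ r = trigPoly G b) (x : Torus d) :
    ‖g x‖ ^ p * (2 * π) ^ d ≤ G.card * ∫ y, ‖g y‖ ^ p := by
  obtain ⟨x₀, -, hx₀⟩ := isCompact_univ.exists_isMaxOn Set.univ_nonempty hg.norm.continuousOn
  set M := ‖g x₀‖
  have hM : ∀ y, ‖g y‖ ≤ M := fun y => hx₀ (Set.mem_univ y)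
  have hr : (r : ℝ) ≠ 0 := (hp.trans_le hpr).ne'
  have hpow : ∀ y, ‖g y‖ ^ (r : ℝ) = ‖g y‖ ^ ((r : ℝ) - p) * ‖g y‖ ^ p := fun y => by
    rw [← Real.rpow_add' (norm_nonneg _) (by rwa [sub_add_cancel]), sub_add_cancel]
  suffices key : M ^ p * (2 * π) ^ d ≤ G.card * ∫ y, ‖g y‖ ^ p by
    refine le_trans ?_ key
    gcongr
    exact hM x
  rcases (norm_nonneg _ : 0 ≤ M).eq_or_lt with hM₀ | hM₀
  · rw [show M = 0 from hM₀.symm, Real.zero_rpow hp.ne', zero_mul]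
    exact mul_nonneg (Nat.cast_nonneg _) (integral_nonneg fun y => by positivity)
  have hnorm_pow : ∀ y, ‖trigPoly G b y‖ = ‖g y‖ ^ (r : ℝ) := fun y => by
    rw [← hgr, Pi.pow_apply, norm_pow, Real.rpow_natCast]
  have hint : ∫ y, ‖g y‖ ^ (r : ℝ) ≤ M ^ ((r : ℝ) - p) * ∫ y, ‖g y‖ ^ p := by
    rw [← integral_const_mul]
    refine integral_mono ?_ ?_ fun y => ?_
    · exact (hg.norm.rpow_const fun _ => Or.inr (Nat.cast_nonneg r)).integrable_of_hasCompactSupport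
        (.of_compactSpace _)
    · exact ((hg.norm.rpow_const fun _ => Or.inr hp.le).const_mul _).integrable_of_hasCompactSupport
        (.of_compactSpace _)
    · rw [hpow]
      gcongr
      exact hM y
  have hMr : 0 < M ^ ((r : ℝ) - p) := Real.rpow_pos_of_pos hM₀ _
  refine le_of_mul_le_mul_left ?_ hMr
  calc M ^ ((r : ℝ) - p) * (M ^ p * (2 * π) ^ d) = ‖trigPoly G b x₀‖ * (2 * π) ^ d := by
        rw [hnorm_pow, hpow, mul_assoc]
    _ ≤ G.card * ∫ y, ‖g y‖ ^ (r : ℝ) := by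
        simpa only [hnorm_pow] using norm_trigPoly_mul_le_card_mul_integral G b x₀
    _ ≤ G.card * (M ^ ((r : ℝ) - p) * ∫ y, ‖g y‖ ^ p) := by gcongr
    _ = M ^ ((r : ℝ) - p) * (G.card * ∫ y, ‖g y‖ ^ p) := by ring

lemma norm_trigPoly_box_le {p : ℝ} (hp : 0 < p) (s : Fin d → ℕ) (a : (Fin d → ℤ) → ℂ)
    (x : Torus d) :
    ‖trigPoly (box s 1) a x‖ ≤ ((2 * ⌈p⌉₊ : ℝ) ^ d * 2 ^ ∑ j, s j) ^ p⁻¹ *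
      Lnorm (ENNReal.ofReal p) (trigPoly (box s 1) a) := by
  have hr : ⌈p⌉₊ ≠ 0 := (Nat.ceil_pos.mpr hp).ne'
  obtain ⟨b, hb⟩ := exists_trigPoly_box_pow_eq s a hr
  have hg := continuous_trigPoly (box s 1) a
  have hpi : (1 : ℝ) ≤ (2 * π) ^ d := one_le_pow₀ (by linarith [Real.pi_gt_three])
  rw [Lnorm_ofReal_eq_integral hg hp, ← Real.mul_rpow (by positivity)
    (integral_nonneg fun y => by positivity), Real.le_rpow_inv_iff_of_pos (norm_nonneg _)
    (by positivity) hp]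
  calc ‖trigPoly (box s 1) a x‖ ^ p ≤ ‖trigPoly (box s 1) a x‖ ^ p * (2 * π) ^ d :=
        le_mul_of_one_le_right (by positivity) hpi
    _ ≤ (box s ⌈p⌉₊).card * ∫ y, ‖trigPoly (box s 1) a y‖ ^ p :=
        norm_rpow_mul_le_of_pow_eq_trigPoly hg hp (Nat.le_ceil p) hb x
    _ ≤ _ := by
        gcongr
        exact_mod_cast card_box_le s _

end Nikolskii

section Counting

lemma card_antidiagonalTuple_le (d m : ℕ) :
    (Finset.Nat.antidiagonalTuple d m).card ≤ (m + 1) ^ (d - 1) := by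
  cases d with
  | zero => exact (Finset.card_le_univ _).trans (by simp)
  | succ d =>
    -- a tuple with prescribed sum is determined by its tail
    rw [Nat.add_sub_cancel, ← Finset.card_range (m + 1), ← Fintype.card_piFinset_const]
    refine Finset.card_le_card_of_injOn Fin.tail (fun s hs => ?_) fun s hs t ht hst => ?_
    · rw [Finset.mem_coe, Finset.Nat.mem_antidiagonalTuple, Fin.sum_univ_succ] at hs
      simp only [Finset.mem_coe, Fintype.mem_piFinset, Finset.mem_range, Fin.tail]
      intro j
      have := Finset.single_le_sum (fun i _ => Nat.zero_le (s i.succ)) (Finset.mem_univ j)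
      omega
    · rw [Finset.mem_coe, Finset.Nat.mem_antidiagonalTuple, Fin.sum_univ_succ] at hs ht
      have h0 : s 0 = t 0 := by
        have : ∑ i : Fin d, s i.succ = ∑ i : Fin d, t i.succ := congrArg (∑ i, · i) hst
        omega
      rw [← Fin.cons_self_tail s, ← Fin.cons_self_tail t, hst, h0]

def blockIndices (d n : ℕ) : Finset (Fin d → ℕ) :=
  (Finset.range (n + 1)).biUnion (Finset.Nat.antidiagonalTuple d)

lemma mem_blockIndices {d n : ℕ} {s : Fin d → ℕ} : s ∈ blockIndices d n ↔ ∑ j, s j ≤ n := by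
  simp [blockIndices, Finset.Nat.mem_antidiagonalTuple]

instance (d n : ℕ) : Finite {s : Fin d → ℕ // ∑ j, s j ≤ n} :=
  ((blockIndices d n).finite_toSet.subset fun _ hs => mem_blockIndices.mpr hs).to_subtype

lemma sum_blockIndices_pow_le (d n : ℕ) {q : ℝ} (hq : 1 < q) :
    ∑ s ∈ blockIndices d n, q ^ ∑ j, s j ≤ (n + 1) ^ (d - 1) * (q / (q - 1)) * q ^ n := by
  have hdisj : Set.PairwiseDisjoint ↑(Finset.range (n + 1)) (Finset.Nat.antidiagonalTuple d) :=
    fun m _ m' _ hmm' => Finset.disjoint_left.mpr fun s hs hs' => hmm' <|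
      (Finset.Nat.mem_antidiagonalTuple.mp hs).symm.trans (Finset.Nat.mem_antidiagonalTuple.mp hs')
  have hfiber : ∀ m ∈ Finset.range (n + 1), ∑ s ∈ Finset.Nat.antidiagonalTuple d m,
      q ^ ∑ j, s j ≤ (n + 1) ^ (d - 1) * q ^ m := fun m hm => by
    rw [Finset.sum_congr rfl fun s hs => by rw [Finset.Nat.mem_antidiagonalTuple.mp hs],
      Finset.sum_const, nsmul_eq_mul]
    gcongr
    calc ((Finset.Nat.antidiagonalTuple d m).card : ℝ) ≤ ((m + 1) ^ (d - 1) : ℕ) := by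
          exact_mod_cast card_antidiagonalTuple_le d m
      _ ≤ (n + 1) ^ (d - 1) := by
          push_cast
          gcongr
          exact_mod_cast Finset.mem_range_succ_iff.mp hm
  have hgeom : ∑ m ∈ Finset.range (n + 1), q ^ m ≤ q / (q - 1) * q ^ n := by
    rw [geom_sum_eq hq.ne', div_mul_eq_mul_div, ← pow_succ']
    gcongr
    linarith
  calc ∑ s ∈ blockIndices d n, q ^ ∑ j, s j
      ≤ ∑ m ∈ Finset.range (n + 1), (n + 1) ^ (d - 1) * q ^ m := by
        rw [blockIndices, Finset.sum_biUnion hdisj]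
        exact Finset.sum_le_sum hfiber
    _ ≤ (n + 1) ^ (d - 1) * (q / (q - 1) * q ^ n) := by
        rw [← Finset.mul_sum]
        gcongr
    _ = (n + 1) ^ (d - 1) * (q / (q - 1)) * q ^ n := by ring

end Counting

section Decomposition

variable {d : ℕ}

lemma deltaS_eq_trigPoly (s : Fin d → ℕ) (c : (Fin d → ℤ) → ℂ) :
    deltaS d s c = trigPoly (box s 1) ((rho d s).indicator c) := by
  funext x
  rw [← tsum_eq_trigPoly ((Set.support_indicator_subset).trans (rho_subset_box s))]
  simp only [deltaS, Set.indicator_apply]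

lemma norm_deltaS_le {p : ℝ} (hp : 0 < p) (s : Fin d → ℕ) (c : (Fin d → ℤ) → ℂ) (x : Torus d) :
    ‖deltaS d s c x‖ ≤ ((2 * ⌈p⌉₊ : ℝ) ^ d) ^ p⁻¹ * ((2 : ℝ) ^ p⁻¹) ^ (∑ j, s j) *
      Lnorm (ENNReal.ofReal p) (deltaS d s c) := by
  rw [deltaS_eq_trigPoly]
  refine (norm_trigPoly_box_le hp s _ x).trans_eq ?_
  rw [Real.mul_rpow (by positivity) (by positivity), ← Real.rpow_pow_comm zero_le_two]

lemma sum_indicator_rho {n : ℕ} (c : (Fin d → ℤ) → ℂ) {k : Fin d → ℤ} (hk : k ∈ QSet d n) :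
    ∑ s ∈ blockIndices d n, (rho d s).indicator c k = c k := by
  obtain ⟨s₀, hs₀, hk₀⟩ := Set.mem_iUnion₂.mp hk
  rw [Finset.sum_eq_single_of_mem s₀ (mem_blockIndices.mpr hs₀) fun s _ hs =>
    Set.indicator_of_notMem (fun hks => hs (eq_of_mem_rho hks hk₀)) c]
  exact Set.indicator_of_mem hk₀ c

lemma tsum_eq_sum_deltaS {n : ℕ} {c : (Fin d → ℤ) → ℂ} (hfin : (Function.support c).Finite)
    (hQ : Function.support c ⊆ QSet d n) (x : Torus d) :
    ∑' k, c k * charF k x = ∑ s ∈ blockIndices d n, deltaS d s c x := by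
  have hF : Function.support c ⊆ hfin.toFinset := by simp
  have hδ : ∀ s, deltaS d s c x = trigPoly hfin.toFinset ((rho d s).indicator c) x := fun s => by
    rw [deltaS_eq_trigPoly,
      ← tsum_eq_trigPoly (Set.support_indicator_subset.trans (rho_subset_box s)),
      tsum_eq_trigPoly (Set.support_indicator.trans_subset (Set.inter_subset_right.trans hF))]
  simp_rw [hδ, tsum_eq_trigPoly hF, trigPoly]
  rw [Finset.sum_comm]
  refine Finset.sum_congr rfl fun k hk => ?_
  rw [← Finset.sum_mul, sum_indicator_rho c (hQ (hfin.mem_toFinset.mp hk))]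

lemma Lnorm_deltaS_le_iSup {p : ℝ} {n : ℕ} (c : (Fin d → ℤ) → ℂ) {s : Fin d → ℕ}
    (hs : s ∈ blockIndices d n) :
    Lnorm (ENNReal.ofReal p) (deltaS d s c) ≤
      ⨆ s : {s : Fin d → ℕ // ∑ j, s j ≤ n}, Lnorm (ENNReal.ofReal p) (deltaS d s.1 c) :=
  le_ciSup (f := fun s : {s : Fin d → ℕ // ∑ j, s j ≤ n} => Lnorm _ (deltaS d s.1 c))
    (Set.finite_range _).bddAbove ⟨s, mem_blockIndices.mp hs⟩

lemma norm_sum_deltaS_le {p : ℝ} (hp : 0 < p) (n : ℕ) (c : (Fin d → ℤ) → ℂ) (x : Torus d) :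
    ‖∑ s ∈ blockIndices d n, deltaS d s c x‖ ≤
      ((2 * ⌈p⌉₊ : ℝ) ^ d) ^ p⁻¹ * (∑ s ∈ blockIndices d n, ((2 : ℝ) ^ p⁻¹) ^ ∑ j, s j) *
        ⨆ s : {s : Fin d → ℕ // ∑ j, s j ≤ n}, Lnorm (ENNReal.ofReal p) (deltaS d s.1 c) := by
  rw [Finset.mul_sum, Finset.sum_mul]
  refine (norm_sum_le _ _).trans (Finset.sum_le_sum fun s hs => ?_)
  exact (norm_deltaS_le hp s c x).trans (by gcongr; exact Lnorm_deltaS_le_iSup c hs)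

end Decomposition

lemma add_one_pow_le_two_pow_mul_pow {n : ℕ} (hn : 1 ≤ n) (k : ℕ) :
    ((n : ℝ) + 1) ^ k ≤ 2 ^ k * (n : ℝ) ^ k := by
  rw [← mul_pow]
  gcongr
  linarith [(Nat.one_le_cast (α := ℝ)).mpr hn]

lemma Lnorm_top_le {d : ℕ} {f : Torus d → ℂ} {C : ℝ} (hC : 0 ≤ C) (h : ∀ x, ‖f x‖ ≤ C) :
    Lnorm ⊤ f ≤ C := by
  rw [Lnorm, eLpNorm_exponent_top]
  exact ENNReal.toReal_le_of_le_ofReal hC (eLpNormEssSup_le_of_ae_bound (.of_forall h))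

theorem nikolskii_hyperbolic_Hp_general (d : ℕ) (p : ℝ) (hp : 1 ≤ p) :
    ∃ C : ℝ, 0 < C ∧ ∀ n : ℕ, 1 ≤ n → ∀ c : (Fin d → ℤ) → ℂ,
      (Function.support c).Finite → Function.support c ⊆ QSet d n →
      Lnorm ⊤ (fun x => ∑' k, c k * charF k x) ≤
        C * (2 : ℝ) ^ ((n : ℝ) / p) * (n : ℝ) ^ (d - 1) *
          ⨆ s : {s : Fin d → ℕ // ∑ j, s j ≤ n}, Lnorm (ENNReal.ofReal p) (deltaS d s.1 c) := by
  have hp₀ : 0 < p := one_pos.trans_le hp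
  set q : ℝ := 2 ^ p⁻¹
  have hq : 1 < q := Real.one_lt_rpow one_lt_two (inv_pos.mpr hp₀)
  set K : ℝ := ((2 * ⌈p⌉₊ : ℝ) ^ d) ^ p⁻¹
  refine ⟨K * (2 ^ (d - 1) * (q / (q - 1))), by positivity, fun n hn c hfin hQ => ?_⟩
  set L := ⨆ s : {s : Fin d → ℕ // ∑ j, s j ≤ n}, Lnorm (ENNReal.ofReal p) (deltaS d s.1 c)
  have hL : 0 ≤ L := Real.iSup_nonneg fun _ => ENNReal.toReal_nonneg
  refine Lnorm_top_le (by positivity) fun x => ?_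
  calc ‖∑' k, c k * charF k x‖ = ‖∑ s ∈ blockIndices d n, deltaS d s c x‖ := by
        rw [tsum_eq_sum_deltaS hfin hQ x]
    _ ≤ K * (∑ s ∈ blockIndices d n, q ^ ∑ j, s j) * L := norm_sum_deltaS_le hp₀ n c x
    _ ≤ K * ((n + 1) ^ (d - 1) * (q / (q - 1)) * q ^ n) * L := by
        gcongr
        exact sum_blockIndices_pow_le d n hq
    _ ≤ K * (2 ^ (d - 1) * (n : ℝ) ^ (d - 1) * (q / (q - 1)) * q ^ n) * L := by
        gcongr
        exact add_one_pow_le_two_pow_mul_pow hn _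
    _ = K * (2 ^ (d - 1) * (q / (q - 1))) * 2 ^ ((n : ℝ) / p) * (n : ℝ) ^ (d - 1) * L := by
        rw [← Real.rpow_mul_natCast zero_le_two, inv_mul_eq_div]
        ring

/-- Nikol'skii inequality for hyperbolic crosses in terms of the `H_p`-norm:
`‖f‖_∞ ≤ C(d,p) 2^{n/p} n^{d-1} max_{‖s‖₁ ≤ n} ‖δ_s(f)‖_p` for every trigonometric
polynomial `f` with frequencies in `Q_n`. -/
theorem nikolskii_hyperbolic_Hp (d : ℕ) (hd : 1 ≤ d) (p : ℝ) (hp : 1 ≤ p) :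
    ∃ C : ℝ, 0 < C ∧ ∀ n : ℕ, 1 ≤ n → ∀ c : (Fin d → ℤ) → ℂ,
      (Function.support c).Finite → Function.support c ⊆ QSet d n →
      Lnorm ⊤ (fun x => ∑' k, c k * charF k x) ≤
        C * (2 : ℝ) ^ ((n : ℝ) / p) * (n : ℝ) ^ (d - 1) *
          ⨆ s : {s : Fin d → ℕ // ∑ j, s j ≤ n}, Lnorm (ENNReal.ofReal p) (deltaS d s.1 c) :=
  nikolskii_hyperbolic_Hp_general d p hp
end
end
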